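/- For every real μ with γ < μ ≤ 0, the intertwining relation L(μ)·Â(μ) = (A − μI)·L(μ) holds, where Â(μ) = [[0, K(μ)^{1/2}M^{-1/2}], [−M^{-1/2}K(μ)^{1/2}, −M^{-1/2}(2μM + C)M^{-1/2}]], A = [[0, K^{1/2}M^{-1/2}], [−M^{-1/2}K^{1/2}, −M^{-1/2}CM^{-1/2}]] and L(μ) = [[K^{1/2}K(μ)^{-1/2}, 0], [μ M^{1/2}K(μ)^{-1/2}, I]]. -/

import Mathlib

/-!
Write `a = M^{1/2}`, `b = K^{1/2}` and `s = K(μ)^{1/2}`. Given only that `a` and `s` are invertible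
with `a² = M`, `b² = K` and `s² = μ²M + μC + K`, the relation is a blockwise computation that
holds for matrices over any commutative ring; the one block that needs the pencil is the
lower-left one, where `a⁻¹ s = a⁻¹ s² s⁻¹` expands into `μ² a s⁻¹ + μ a⁻¹ C s⁻¹ + a⁻¹ b² s⁻¹`.

What remains is that `K(μ)` is positive definite for `μ > γ`. For `x ≠ 0` its quadratic form is
`μ² m(x) + μ c(x) + k(x)`, which is positive to the right of `r(x)`, the largest real part of a root;
and `r(x) ≤ γ`, the supremum being finite because every `r(x)` is negative.
-/

open Matrix
open scoped ComplexOrder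

noncomputable section

/-- The value `x* P x` (which is real for Hermitian `P`), taken as its real part. -/
def qf {n : ℕ} (P : Matrix (Fin n) (Fin n) ℂ) (x : Fin n → ℂ) : ℝ :=
  (star x ⬝ᵥ P.mulVec x).re

/-- The (positive semidefinite) square root of a positive semidefinite matrix,
extended by `0` to all matrices. -/
def msqrt {n : ℕ} (P : Matrix (Fin n) (Fin n) ℂ) : Matrix (Fin n) (Fin n) ℂ :=
  open scoped Classical in
  if h : P.PosSemidef then
    (h.1.eigenvectorUnitary : Matrix (Fin n) (Fin n) ℂ) *
      diagonal ((↑) ∘ (Real.sqrt ·) ∘ h.1.eigenvalues) *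
      (star h.1.eigenvectorUnitary : Matrix (Fin n) (Fin n) ℂ)
  else 0

/-- The quadratic matrix pencil `K(λ) = λ²M + λC + K`. -/
def Kpen {n : ℕ} (M C K : Matrix (Fin n) (Fin n) ℂ) (lam : ℂ) :
    Matrix (Fin n) (Fin n) ℂ :=
  lam ^ 2 • M + lam • C + K

/-- The real part of the `+`-root of the scalar quadratic
`m(x) λ² + c(x) λ + k(x) = 0`. -/
def rfun {n : ℕ} (M C K : Matrix (Fin n) (Fin n) ℂ) (x : Fin n → ℂ) : ℝ :=
  open scoped Classical in
  if (qf C x) ^ 2 ≥ 4 * qf M x * qf K x then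
    (-(qf C x) + Real.sqrt ((qf C x) ^ 2 - 4 * qf M x * qf K x)) / (2 * qf M x)
  else
    -(qf C x) / (2 * qf M x)

/-- The spectral-shift bound `γ = sup_{x ≠ 0} Re p₊(x)`. -/
def gam {n : ℕ} (M C K : Matrix (Fin n) (Fin n) ℂ) : ℝ :=
  sSup {y : ℝ | ∃ x : Fin n → ℂ, x ≠ 0 ∧ rfun M C K x = y}

/-- The phase-space matrix `A = [[0, K½ M⁻½], [−M⁻½ K½, −M⁻½ C M⁻½]]`. -/
def phaseA {n : ℕ} (M C K : Matrix (Fin n) (Fin n) ℂ) :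
    Matrix (Fin n ⊕ Fin n) (Fin n ⊕ Fin n) ℂ :=
  fromBlocks 0 (msqrt K * (msqrt M)⁻¹)
    (-((msqrt M)⁻¹ * msqrt K)) (-((msqrt M)⁻¹ * C * (msqrt M)⁻¹))

/-- The operator norm of a matrix with respect to the Euclidean norm. -/
def opNorm {m : Type*} [Fintype m] [DecidableEq m] (A : Matrix m m ℂ) : ℝ :=
  ‖toEuclideanCLM (𝕜 := ℂ) A‖

/-- The block matrix `L(μ) = [[K½ K(μ)⁻½, 0], [μ M½ K(μ)⁻½, I]]`. -/
def Lmat {n : ℕ} (M C K : Matrix (Fin n) (Fin n) ℂ) (mu : ℝ) :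
    Matrix (Fin n ⊕ Fin n) (Fin n ⊕ Fin n) ℂ :=
  fromBlocks (msqrt K * (msqrt (Kpen M C K (mu : ℂ)))⁻¹) 0
    ((mu : ℂ) • (msqrt M * (msqrt (Kpen M C K (mu : ℂ)))⁻¹)) 1

section BlockIdentity

variable {R n : Type*} [CommRing R] [Fintype n] [DecidableEq n]

theorem fromBlocks_intertwining_of_mul_self_eq {M C K a b s : Matrix n n R} (μ : R)
    (ha : IsUnit a.det) (hs : IsUnit s.det)
    (haa : a * a = M) (hbb : b * b = K) (hss : s * s = μ ^ 2 • M + μ • C + K) :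
    fromBlocks (b * s⁻¹) 0 (μ • (a * s⁻¹)) 1 *
        fromBlocks 0 (s * a⁻¹) (-(a⁻¹ * s)) (-(a⁻¹ * ((2 * μ) • M + C) * a⁻¹)) =
      (fromBlocks 0 (b * a⁻¹) (-(a⁻¹ * b)) (-(a⁻¹ * C * a⁻¹)) - μ • 1) *
        fromBlocks (b * s⁻¹) 0 (μ • (a * s⁻¹)) 1 := by
  subst haa hbb
  have hs_expand : a⁻¹ * s = a⁻¹ * (s * s) * s⁻¹ := by
    rw [Matrix.mul_assoc, Matrix.mul_assoc, mul_nonsing_inv _ hs, Matrix.mul_one]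
  rw [← fromBlocks_one, fromBlocks_smul, smul_zero, sub_eq_add_neg,
    fromBlocks_neg, fromBlocks_add, fromBlocks_multiply,
    fromBlocks_multiply, fromBlocks_inj, hs_expand, hss]
  refine ⟨?_, ?_, ?_, ?_⟩ <;>
    simp only [Matrix.zero_mul, Matrix.mul_zero, zero_add, add_zero, neg_zero, Matrix.neg_mul,
      Matrix.mul_neg, Matrix.one_mul, Matrix.mul_one, Matrix.smul_mul, Matrix.mul_smul,
      Matrix.add_mul, Matrix.mul_add, Matrix.mul_assoc, nonsing_inv_mul_cancel_left,
      mul_nonsing_inv, ha, hs] <;>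
    module

end BlockIdentity

section SquareRoot

variable {n : ℕ} {P : Matrix (Fin n) (Fin n) ℂ}

theorem msqrt_mul_self (hP : P.PosSemidef) : msqrt P * msqrt P = P := by
  rw [msqrt, dif_pos hP]
  set U : Matrix (Fin n) (Fin n) ℂ := ↑hP.1.eigenvectorUnitary
  have hU : star U * U = 1 := Unitary.star_mul_self_of_mem hP.1.eigenvectorUnitary.2
  have hD : diagonal (((↑) ∘ (Real.sqrt ·) ∘ hP.1.eigenvalues : Fin n → ℂ)) *
      diagonal ((↑) ∘ (Real.sqrt ·) ∘ hP.1.eigenvalues) =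
      diagonal (RCLike.ofReal ∘ hP.1.eigenvalues) := by
    rw [diagonal_mul_diagonal]
    congr 1
    funext i
    simp only [Function.comp_apply]
    rw [← Complex.ofReal_mul, Real.mul_self_sqrt (hP.eigenvalues_nonneg i)]
    rfl
  conv_rhs => rw [hP.1.spectral_theorem, Unitary.conjStarAlgAut_apply]
  simp only [Matrix.mul_assoc]
  rw [← Matrix.mul_assoc (star U) U, hU, Matrix.one_mul, ← Matrix.mul_assoc (diagonal _), hD]

theorem isUnit_det_msqrt (hP : P.PosDef) : IsUnit (msqrt P).det := by
  refine isUnit_of_mul_isUnit_left (y := (msqrt P).det) ?_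
  rw [← det_mul, msqrt_mul_self hP.posSemidef]
  exact hP.det_pos.ne'.isUnit

end SquareRoot

section ShiftedPencil

variable {n : ℕ} {M C K : Matrix (Fin n) (Fin n) ℂ}

theorem rfun_neg (hM : M.PosDef) (hC : C.PosDef) (hK : K.PosDef) {x : Fin n → ℂ}
    (hx : x ≠ 0) : rfun M C K x < 0 := by
  have hm : 0 < qf M x := hM.re_dotProduct_pos hx
  have hc : 0 < qf C x := hC.re_dotProduct_pos hx
  have hk : 0 < qf K x := hK.re_dotProduct_pos hx
  rw [rfun]
  split_ifs
  · apply div_neg_of_neg_of_pos _ (by positivity)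
    have : √(qf C x ^ 2 - 4 * qf M x * qf K x) < qf C x :=
      (Real.sqrt_lt' hc).mpr (by nlinarith)
    linarith
  · exact div_neg_of_neg_of_pos (by linarith) (by positivity)

theorem rfun_le_gam (hM : M.PosDef) (hC : C.PosDef) (hK : K.PosDef) {x : Fin n → ℂ}
    (hx : x ≠ 0) : rfun M C K x ≤ gam M C K := by
  refine le_csSup ⟨0, ?_⟩ ⟨x, hx, rfl⟩
  rintro _ ⟨y, hy, rfl⟩
  exact (rfun_neg hM hC hK hy).le

theorem quadratic_pos_of_rfun_lt {x : Fin n → ℂ} {mu : ℝ} (hm : 0 < qf M x)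
    (hmu : rfun M C K x < mu) : 0 < mu ^ 2 * qf M x + mu * qf C x + qf K x := by
  rw [rfun] at hmu
  split_ifs at hmu with hdisc
  · set d := qf C x ^ 2 - 4 * qf M x * qf K x
    have hd : √d ^ 2 = d := Real.sq_sqrt (by linarith)
    rw [div_lt_iff₀ (by positivity)] at hmu
    -- `μ` lies to the right of both real roots, so both factors of the quadratic are positive
    have hminus : 0 < 2 * qf M x * mu + qf C x - √d := by nlinarith [Real.sqrt_nonneg d]
    have hplus : 0 < 2 * qf M x * mu + qf C x + √d := by nlinarith [Real.sqrt_nonneg d]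
    nlinarith [mul_pos hminus hplus]
  · rw [div_lt_iff₀ (by positivity)] at hmu
    nlinarith [sq_nonneg (2 * qf M x * mu + qf C x)]

theorem Kpen_isHermitian (hM : M.IsHermitian) (hC : C.IsHermitian) (hK : K.IsHermitian)
    (mu : ℝ) : (Kpen M C K (mu : ℂ)).IsHermitian := by
  simp [Matrix.IsHermitian, Kpen, conjTranspose_add, conjTranspose_smul, hM.eq, hC.eq, hK.eq]

theorem re_star_dotProduct_Kpen_mulVec (mu : ℝ) (x : Fin n → ℂ) :
    (star x ⬝ᵥ Kpen M C K (mu : ℂ) *ᵥ x).re = mu ^ 2 * qf M x + mu * qf C x + qf K x := by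
  simp [Kpen, qf, add_mulVec, smul_mulVec, dotProduct_add, dotProduct_smul, ← Complex.ofReal_pow]

theorem Kpen_posDef_of_gam_lt (hM : M.PosDef) (hC : C.PosDef) (hK : K.PosDef) {mu : ℝ}
    (hmu : gam M C K < mu) : (Kpen M C K (mu : ℂ)).PosDef := by
  have hherm := Kpen_isHermitian hM.1 hC.1 hK.1 mu
  refine posDef_iff_dotProduct_mulVec.mpr ⟨hherm, fun x hx => RCLike.pos_iff.mpr ⟨?_, ?_⟩⟩
  · rw [RCLike.re_to_complex, re_star_dotProduct_Kpen_mulVec]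
    exact quadratic_pos_of_rfun_lt (hM.re_dotProduct_pos hx)
      ((rfun_le_gam hM hC hK hx).trans_lt hmu)
  · exact hherm.im_star_dotProduct_mulVec_self x

end ShiftedPencil

theorem intertwining_general {n : ℕ}
    (M C K : Matrix (Fin n) (Fin n) ℂ)
    (hM : M.PosDef) (hC : C.PosDef) (hK : K.PosDef) :
    ∀ mu : ℝ, gam M C K < mu → mu ≤ 0 →
      Lmat M C K mu *
        fromBlocks 0 (msqrt (Kpen M C K (mu : ℂ)) * (msqrt M)⁻¹)
          (-((msqrt M)⁻¹ * msqrt (Kpen M C K (mu : ℂ))))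
          (-((msqrt M)⁻¹ * (((2 * mu : ℝ) : ℂ) • M + C) * (msqrt M)⁻¹)) =
      (phaseA M C K - (mu : ℂ) • 1) * Lmat M C K mu := by
  intro mu hmu _
  have hpen := Kpen_posDef_of_gam_lt hM hC hK hmu
  push_cast
  exact fromBlocks_intertwining_of_mul_self_eq (mu : ℂ) (isUnit_det_msqrt hM)
    (isUnit_det_msqrt hpen) (msqrt_mul_self hM.posSemidef) (msqrt_mul_self hK.posSemidef)
    (msqrt_mul_self hpen.posSemidef)

/-- The intertwining relation `L(μ) Â(μ) = (A − μI) L(μ)` for `γ < μ ≤ 0`,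
where `Â(μ)` is the phase-space matrix of the shifted system. -/
theorem intertwining {n : ℕ} (hn : 1 ≤ n)
    (M C K : Matrix (Fin n) (Fin n) ℂ)
    (hM : M.PosDef) (hC : C.PosDef) (hK : K.PosDef) :
    ∀ mu : ℝ, gam M C K < mu → mu ≤ 0 →
      Lmat M C K mu *
        fromBlocks 0 (msqrt (Kpen M C K (mu : ℂ)) * (msqrt M)⁻¹)
          (-((msqrt M)⁻¹ * msqrt (Kpen M C K (mu : ℂ))))
          (-((msqrt M)⁻¹ * (((2 * mu : ℝ) : ℂ) • M + C) * (msqrt M)⁻¹)) =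
      (phaseA M C K - (mu : ℂ) • 1) * Lmat M C K mu :=
  intertwining_general M C K hM hC hK
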